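/- Under the stated hypotheses, each of the three operator families (N_k)_{k∈ℤ}, (S_k)_{k∈ℤ} and (T_k)_{k∈ℤ} is M-bounded; that is, for M_k equal to N_k, S_k or T_k one has sup_{k∈ℤ} ‖M_k‖ < ∞ and sup_{k∈ℤ} ‖k·(M_{k+1} − M_k)‖ < ∞. -/
import Mathlib

open Finset

section helpers

lemma pow_diff_abs (k : ℤ) (j : ℕ) (hj : 1 ≤ j) :
    ‖(Complex.I * ((k : ℂ) + 1)) ^ j - (Complex.I * (k : ℂ)) ^ j‖ ≤
      (j : ℝ) * (|(k : ℝ)| + 1) ^ (j - 1) := by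
  have hgeom := geom_sum₂_mul (Complex.I * ((k : ℂ) + 1)) (Complex.I * (k : ℂ)) j
  have hxy : Complex.I * ((k : ℂ) + 1) - Complex.I * (k : ℂ) = Complex.I := by ring
  rw [hxy] at hgeom
  rw [← hgeom, norm_mul, Complex.norm_I, mul_one]
  have hM0 : (0:ℝ) ≤ |(k : ℝ)| + 1 := by positivity
  calc ‖∑ i ∈ Finset.range j, (Complex.I * ((k:ℂ)+1)) ^ i * (Complex.I * (k:ℂ)) ^ (j - 1 - i)‖
      ≤ ∑ i ∈ Finset.range j, ‖(Complex.I * ((k:ℂ)+1)) ^ i * (Complex.I * (k:ℂ)) ^ (j - 1 - i)‖ :=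
        norm_sum_le _ _
    _ ≤ ∑ _i ∈ Finset.range j, (|(k:ℝ)| + 1) ^ (j - 1) := by
        apply Finset.sum_le_sum
        intro i hi
        rw [norm_mul, norm_pow, norm_pow]
        have h1 : ‖Complex.I * ((k:ℂ)+1)‖ ≤ |(k:ℝ)| + 1 := by
          rw [norm_mul, Complex.norm_I, one_mul]
          calc ‖(k:ℂ)+1‖ ≤ ‖(k:ℂ)‖ + ‖(1:ℂ)‖ := norm_add_le _ _
            _ = |(k:ℝ)| + 1 := by simp
        have h2 : ‖Complex.I * (k:ℂ)‖ ≤ |(k:ℝ)| + 1 := by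
          rw [norm_mul, Complex.norm_I, one_mul]
          simp
        have hij' : i < j := Finset.mem_range.mp hi
        have hij : i + (j - 1 - i) = j - 1 := by omega
        calc ‖Complex.I * ((k:ℂ)+1)‖ ^ i * ‖Complex.I * (k:ℂ)‖ ^ (j-1-i)
            ≤ (|(k:ℝ)| + 1) ^ i * (|(k:ℝ)| + 1) ^ (j-1-i) := by
              apply mul_le_mul (pow_le_pow_left₀ (norm_nonneg _) h1 i)
                (pow_le_pow_left₀ (norm_nonneg _) h2 _) (by positivity) (by positivity)
          _ = (|(k:ℝ)| + 1) ^ (j - 1) := by rw [← pow_add, hij]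
    _ = (j : ℝ) * (|(k:ℝ)| + 1) ^ (j - 1) := by
        rw [Finset.sum_const, Finset.card_range, nsmul_eq_mul]

lemma kbound (k : ℤ) (j n : ℕ) (hj1 : 1 ≤ j) (hjn : j ≤ n) :
    |(k : ℝ)| * (|(k : ℝ)| + 1) ^ (j - 1) ≤ 2 ^ (n - 1) * |(k : ℝ)| ^ n := by
  rcases eq_or_ne k 0 with rfl | hk
  · simp [zero_pow (by omega : n ≠ 0)]
  · have ha : (1:ℝ) ≤ |(k : ℝ)| := by
      have := Int.one_le_abs hk
      calc (1:ℝ) = ((1:ℤ):ℝ) := by norm_num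
        _ ≤ ((|k|:ℤ):ℝ) := by exact_mod_cast this
        _ = |(k:ℝ)| := by push_cast; ring
    set a := |(k:ℝ)| with ha'
    have h1 : (a + 1) ^ (j-1) ≤ (2*a) ^ (j-1) := by
      apply pow_le_pow_left₀ (by positivity) (by linarith)
    have h2 : (2*a)^(j-1) = 2^(j-1) * a^(j-1) := mul_pow _ _ _
    have h3 : a * (2^(j-1) * a^(j-1)) = 2^(j-1) * a^j := by
      have : a ^ j = a ^ (j-1) * a := by
        rw [← pow_succ, show j - 1 + 1 = j by omega]
      rw [this]; ring
    have h4 : a ^ j ≤ a ^ n := pow_le_pow_right₀ ha hjn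
    have h5 : (2:ℝ)^(j-1) ≤ 2^(n-1) := pow_le_pow_right₀ (by norm_num) (by omega)
    calc a * (a+1)^(j-1) ≤ a * (2*a)^(j-1) := by
          apply mul_le_mul_of_nonneg_left h1 (by positivity)
      _ = 2^(j-1) * a^j := by rw [h2, h3]
      _ ≤ 2^(n-1) * a^n := by
          apply mul_le_mul h5 h4 (by positivity) (by positivity)

lemma nsmul' {X : Type*} [NormedAddCommGroup X] [NormedSpace ℂ X]
    (c : ℂ) (T : X →L[ℂ] X) : ‖c • T‖ = ‖c‖ * ‖T‖ := norm_smul c T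

lemma msc {X : Type*} [NormedAddCommGroup X] [NormedSpace ℂ X]
    (c : ℂ) (a b : X →L[ℂ] X) : a * (c • b) = c • (a * b) := mul_smul_comm c a b

lemma sma {X : Type*} [NormedAddCommGroup X] [NormedSpace ℂ X]
    (c : ℂ) (a b : X →L[ℂ] X) : (c • a) * b = c • (a * b) := smul_mul_assoc c a b

end helpers

/-- A family `(M_k)_{k∈ℤ}` of bounded operators is M-bounded if
`sup_k ‖M_k‖ < ∞` and `sup_k ‖k·(M_{k+1} − M_k)‖ < ∞`. -/
def MBounded {X : Type*} [NormedAddCommGroup X] [NormedSpace ℂ X]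
    (M : ℤ → X →L[ℂ] X) : Prop :=
  (∃ C : ℝ, ∀ k : ℤ, ‖M k‖ ≤ C) ∧ (∃ C : ℝ, ∀ k : ℤ, ‖(k : ℂ) • (M (k + 1) - M k)‖ ≤ C)

/-- The operator `D_k := (Σ_{j=1}^{n} (ik)^{j})·I − A − L_k`. -/
noncomputable def Dop {X : Type*} [NormedAddCommGroup X] [NormedSpace ℂ X]
    (n : ℕ) (A : X →L[ℂ] X) (L : ℤ → X →L[ℂ] X) (k : ℤ) : X →L[ℂ] X :=
  (∑ j ∈ Finset.Icc 1 n, (Complex.I * (k : ℂ)) ^ (j : ℕ)) • (1 : X →L[ℂ] X) - A - L k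

/-- the families `(N_k)`, `(S_k)` and `(T_k)` are M-bounded. -/
theorem NST_MBounded {X : Type*} [NormedAddCommGroup X] [NormedSpace ℂ X] [CompleteSpace X]
    (n : ℕ) (hn : 1 ≤ n) (A : X →L[ℂ] X) (L N : ℤ → X →L[ℂ] X)
    (hL : ∃ C : ℝ, ∀ k : ℤ, ‖L k‖ ≤ C)
    (hLdiff : ∃ C : ℝ, ∀ k : ℤ, ‖(k : ℂ) • (L (k + 1) - L k)‖ ≤ C)
    (hN : ∀ k : ℤ, N k * Dop n A L k = 1 ∧ Dop n A L k * N k = 1)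
    (hNbdd : ∃ C : ℝ, ∀ k : ℤ, ‖N k‖ ≤ C)
    (hSbdd : ∃ C : ℝ, ∀ k : ℤ, ‖((Complex.I * (k : ℂ)) ^ (n : ℕ)) • N k‖ ≤ C) :
    MBounded N
    ∧ MBounded (fun k => ((Complex.I * (k : ℂ)) ^ (n : ℕ)) • N k)
    ∧ MBounded (fun k => L k * N k) := by
  obtain ⟨CL, hCL⟩ := hL
  obtain ⟨CL', hCL'⟩ := hLdiff
  obtain ⟨CN, hCN⟩ := hNbdd
  obtain ⟨CS, hCS⟩ := hSbdd
  have hCN0 : 0 ≤ CN := le_trans (norm_nonneg _) (hCN 0)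
  have hCS0 : 0 ≤ CS := le_trans (norm_nonneg _) (hCS 0)
  have hCL0 : 0 ≤ CL := le_trans (norm_nonneg _) (hCL 0)
  have hCL'0 : 0 ≤ CL' := le_trans (norm_nonneg _) (hCL' 0)
  set P : ℤ → ℂ := fun k => ∑ j ∈ Finset.Icc 1 n, (Complex.I * (k : ℂ)) ^ j with hP
  -- norm of the scalar power
  have hSk : ∀ k : ℤ, ‖(Complex.I * (k:ℂ))^n • N k‖ = |(k:ℝ)|^n * ‖N k‖ := by
    intro k
    rw [nsmul', norm_pow, norm_mul, Complex.norm_I, one_mul]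
    simp
  have hSk' : ∀ k : ℤ, |(k:ℝ)|^n * ‖N k‖ ≤ CS := by
    intro k; rw [← hSk k]; exact hCS k
  -- shifted bound
  have hcomp : ∀ k : ℤ, |(k:ℝ)|^n * ‖N (k+1)‖ ≤ 2^n * CS + CN := by
    intro k
    rcases eq_or_ne (k+1) 0 with h0 | h0
    · have hk1 : k = -1 := by omega
      subst hk1
      have h2 : |((-1:ℤ):ℝ)| ^ n = 1 := by norm_num
      rw [h2, one_mul]
      have h3 : ((-1:ℤ)+1) = (0:ℤ) := by norm_num
      rw [h3]
      have h4 : (0:ℝ) ≤ 2^n * CS := by positivity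
      linarith [hCN 0]
    · have h1 : (1:ℝ) ≤ |(k:ℝ)+1| := by
        have h := Int.one_le_abs h0
        have : ((1:ℤ):ℝ) ≤ ((|k+1|:ℤ):ℝ) := by exact_mod_cast h
        calc (1:ℝ) = ((1:ℤ):ℝ) := by norm_num
          _ ≤ ((|k+1|:ℤ):ℝ) := this
          _ = |(k:ℝ)+1| := by push_cast; ring_nf
      have h2 : |(k:ℝ)| ≤ 2 * |(k:ℝ)+1| := by
        have h3 : |(k:ℝ)| ≤ |(k:ℝ)+1| + 1 := by
          calc |(k:ℝ)| = |((k:ℝ)+1) + (-1)| := by ring_nf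
            _ ≤ |(k:ℝ)+1| + |(-1:ℝ)| := abs_add_le _ _
            _ = |(k:ℝ)+1| + 1 := by norm_num
        linarith
      have h4 : |((k+1:ℤ):ℝ)| = |(k:ℝ)+1| := by push_cast; ring_nf
      calc |(k:ℝ)|^n * ‖N (k+1)‖
          ≤ (2*|(k:ℝ)+1|)^n * ‖N (k+1)‖ := by
            apply mul_le_mul_of_nonneg_right (pow_le_pow_left₀ (abs_nonneg _) h2 n) (norm_nonneg _)
        _ = 2^n * (|(k:ℝ)+1|^n * ‖N (k+1)‖) := by rw [mul_pow]; ring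
        _ ≤ 2^n * CS := by
            apply mul_le_mul_of_nonneg_left _ (by positivity)
            have := hSk' (k+1)
            rwa [h4] at this
        _ ≤ 2^n * CS + CN := by linarith
  -- D difference
  have hDdiff : ∀ k : ℤ, Dop n A L k - Dop n A L (k+1)
      = (P k - P (k+1)) • (1 : X →L[ℂ] X) + (L (k+1) - L k) := by
    intro k
    simp only [Dop, hP]
    rw [sub_smul]
    abel
  -- resolvent identity
  have hres : ∀ k : ℤ, N (k+1) - N k
      = N (k+1) * ((Dop n A L k - Dop n A L (k+1)) * N k) := by
    intro k
    have h1 : Dop n A L k * N k = 1 := (hN k).2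
    have h2 : N (k+1) * Dop n A L (k+1) = 1 := (hN (k+1)).1
    calc N (k+1) - N k
        = N (k+1) * (Dop n A L k * N k) - N (k+1) * Dop n A L (k+1) * N k := by
          rw [h1, h2, mul_one, one_mul]
      _ = N (k+1) * ((Dop n A L k - Dop n A L (k+1)) * N k) := by noncomm_ring
  set G : ℤ → X →L[ℂ] X := fun k =>
    ((k:ℂ) * (P k - P (k+1))) • N k + ((k:ℂ) • (L (k+1) - L k)) * N k with hG
  have hkeyG : ∀ k : ℤ, (k:ℂ) • (N (k+1) - N k) = N (k+1) * G k := by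
    intro k
    rw [hres k, hDdiff k]
    simp only [hG]
    rw [← msc, ← sma]
    congr 1
    simp only [smul_add, smul_smul, add_mul, sma, one_mul]
  -- per-term bound
  have hterm : ∀ k : ℤ, ∀ j ∈ Finset.Icc 1 n,
      |(k:ℝ)| * ‖(Complex.I*((k:ℂ)+1))^j - (Complex.I*(k:ℂ))^j‖ * ‖N k‖
        ≤ (n:ℝ) * 2^(n-1) * CS := by
    intro k j hj
    obtain ⟨hj1, hjn⟩ := Finset.mem_Icc.mp hj
    have h1 := pow_diff_abs k j hj1
    have h2 := kbound k j n hj1 hjn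
    have e1 : |(k:ℝ)| * ‖(Complex.I*((k:ℂ)+1))^j - (Complex.I*(k:ℂ))^j‖
        ≤ (j:ℝ) * (|(k:ℝ)| * (|(k:ℝ)|+1)^(j-1)) := by
      calc |(k:ℝ)| * ‖(Complex.I*((k:ℂ)+1))^j - (Complex.I*(k:ℂ))^j‖
          ≤ |(k:ℝ)| * ((j:ℝ) * (|(k:ℝ)|+1)^(j-1)) := mul_le_mul_of_nonneg_left h1 (abs_nonneg _)
        _ = (j:ℝ) * (|(k:ℝ)| * (|(k:ℝ)|+1)^(j-1)) := by ring
    have e2 : (j:ℝ) * (|(k:ℝ)| * (|(k:ℝ)|+1)^(j-1)) ≤ (n:ℝ) * (2^(n-1) * |(k:ℝ)|^n) := by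
      apply mul_le_mul (by exact_mod_cast hjn) h2 (by positivity) (by positivity)
    calc |(k:ℝ)| * ‖(Complex.I*((k:ℂ)+1))^j - (Complex.I*(k:ℂ))^j‖ * ‖N k‖
        ≤ ((n:ℝ) * (2^(n-1) * |(k:ℝ)|^n)) * ‖N k‖ := by
          apply mul_le_mul_of_nonneg_right (e1.trans e2) (norm_nonneg _)
      _ = (n:ℝ) * 2^(n-1) * (|(k:ℝ)|^n * ‖N k‖) := by ring
      _ ≤ (n:ℝ) * 2^(n-1) * CS := by
          apply mul_le_mul_of_nonneg_left (hSk' k) (by positivity)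
  -- first piece of G
  have hG1 : ∀ k : ℤ, ‖((k:ℂ) * (P k - P (k+1))) • N k‖
      ≤ (n:ℝ) * ((n:ℝ) * 2^(n-1) * CS) := by
    intro k
    have hknorm : ‖(k:ℂ)‖ = |(k:ℝ)| := by simp
    have hPd : P k - P (k+1)
        = ∑ j ∈ Finset.Icc 1 n, ((Complex.I*(k:ℂ))^j - (Complex.I*((k:ℂ)+1))^j) := by
      simp only [hP]
      rw [show ((k+1:ℤ):ℂ) = (k:ℂ)+1 by push_cast; ring, ← Finset.sum_sub_distrib]
    have h4 : ‖P k - P (k+1)‖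
        ≤ ∑ j ∈ Finset.Icc 1 n, ‖(Complex.I*((k:ℂ)+1))^j - (Complex.I*(k:ℂ))^j‖ := by
      rw [hPd]
      refine (norm_sum_le _ _).trans (le_of_eq ?_)
      exact Finset.sum_congr rfl fun j _ => norm_sub_rev _ _
    rw [nsmul', norm_mul, hknorm]
    calc |(k:ℝ)| * ‖P k - P (k+1)‖ * ‖N k‖
        ≤ |(k:ℝ)| * (∑ j ∈ Finset.Icc 1 n, ‖(Complex.I*((k:ℂ)+1))^j - (Complex.I*(k:ℂ))^j‖) * ‖N k‖ := by
          apply mul_le_mul_of_nonneg_right (mul_le_mul_of_nonneg_left h4 (abs_nonneg _)) (norm_nonneg _)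
      _ = ∑ j ∈ Finset.Icc 1 n, |(k:ℝ)| * ‖(Complex.I*((k:ℂ)+1))^j - (Complex.I*(k:ℂ))^j‖ * ‖N k‖ := by
          rw [Finset.mul_sum, Finset.sum_mul]
      _ ≤ ∑ _j ∈ Finset.Icc 1 n, (n:ℝ) * 2^(n-1) * CS := Finset.sum_le_sum (hterm k)
      _ = (n:ℝ) * ((n:ℝ) * 2^(n-1) * CS) := by
          rw [Finset.sum_const, Nat.card_Icc, nsmul_eq_mul]
          norm_num
  set CG : ℝ := (n:ℝ) * ((n:ℝ) * 2^(n-1) * CS) + CL' * CN with hCG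
  have hCG0 : 0 ≤ CG := by
    have : (0:ℝ) ≤ (n:ℝ) * ((n:ℝ) * 2^(n-1) * CS) := by positivity
    have : (0:ℝ) ≤ CL' * CN := mul_nonneg hCL'0 hCN0
    positivity
  have hGb : ∀ k : ℤ, ‖G k‖ ≤ CG := by
    intro k
    simp only [hG]
    calc ‖((k:ℂ) * (P k - P (k+1))) • N k + ((k:ℂ) • (L (k+1) - L k)) * N k‖
        ≤ ‖((k:ℂ) * (P k - P (k+1))) • N k‖ + ‖((k:ℂ) • (L (k+1) - L k)) * N k‖ := norm_add_le _ _
      _ ≤ (n:ℝ) * ((n:ℝ) * 2^(n-1) * CS) + CL' * CN := by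
          apply add_le_add (hG1 k)
          exact (norm_mul_le _ _).trans (mul_le_mul (hCL' k) (hCN k) (norm_nonneg _) hCL'0)
  have hNd : ∀ k : ℤ, ‖(k:ℂ) • (N (k+1) - N k)‖ ≤ CN * CG := by
    intro k
    rw [hkeyG k]
    exact (norm_mul_le _ _).trans (mul_le_mul (hCN (k+1)) (hGb k) (norm_nonneg _) hCN0)
  refine ⟨⟨⟨CN, hCN⟩, ⟨CN * CG, hNd⟩⟩, ⟨⟨CS, fun k => hCS k⟩, ⟨(n:ℝ)*2^(n-1)*(2^n*CS+CN) + (2^n*CS+CN)*CG, ?_⟩⟩,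
    ⟨⟨CL*CN, fun k => (norm_mul_le _ _).trans (mul_le_mul (hCL k) (hCN k) (norm_nonneg _) hCL0)⟩,
     ⟨CL'*CN + CL*(CN*CG), ?_⟩⟩⟩
  · -- S difference
    intro k
    have hcast : ((k+1:ℤ):ℂ) = (k:ℂ)+1 := by push_cast; ring
    show ‖(k:ℂ) • ((Complex.I * ((k+1:ℤ):ℂ))^n • N (k+1) - (Complex.I * (k:ℂ))^n • N k)‖ ≤ _
    rw [hcast]
    have hid : (k:ℂ) • ((Complex.I * ((k:ℂ)+1))^n • N (k+1) - (Complex.I * (k:ℂ))^n • N k)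
        = ((k:ℂ) * ((Complex.I * ((k:ℂ)+1))^n - (Complex.I * (k:ℂ))^n)) • N (k+1)
          + (Complex.I * (k:ℂ))^n • ((k:ℂ) • (N (k+1) - N k)) := by
      module
    rw [hid, hkeyG k, ← sma]
    have hb : ‖(Complex.I * (k:ℂ))^n • N (k+1)‖ ≤ 2^n*CS+CN := by
      rw [nsmul', norm_pow, norm_mul, Complex.norm_I, one_mul]
      simpa using hcomp k
    have hfirst : ‖((k:ℂ) * ((Complex.I * ((k:ℂ)+1))^n - (Complex.I * (k:ℂ))^n)) • N (k+1)‖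
        ≤ (n:ℝ)*2^(n-1)*(2^n*CS+CN) := by
      have hknorm : ‖(k:ℂ)‖ = |(k:ℝ)| := by simp
      rw [nsmul', norm_mul, hknorm]
      have h1 := pow_diff_abs k n hn
      have h2 := kbound k n n hn le_rfl
      calc |(k:ℝ)| * ‖(Complex.I * ((k:ℂ)+1))^n - (Complex.I * (k:ℂ))^n‖ * ‖N (k+1)‖
          ≤ ((n:ℝ) * (|(k:ℝ)| * (|(k:ℝ)|+1)^(n-1))) * ‖N (k+1)‖ := by
            apply mul_le_mul_of_nonneg_right _ (norm_nonneg _)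
            calc |(k:ℝ)| * ‖(Complex.I * ((k:ℂ)+1))^n - (Complex.I * (k:ℂ))^n‖
                ≤ |(k:ℝ)| * ((n:ℝ) * (|(k:ℝ)|+1)^(n-1)) := mul_le_mul_of_nonneg_left h1 (abs_nonneg _)
              _ = (n:ℝ) * (|(k:ℝ)| * (|(k:ℝ)|+1)^(n-1)) := by ring
        _ ≤ ((n:ℝ) * (2^(n-1) * |(k:ℝ)|^n)) * ‖N (k+1)‖ := by
            apply mul_le_mul_of_nonneg_right (mul_le_mul_of_nonneg_left h2 (by positivity)) (norm_nonneg _)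
        _ = (n:ℝ)*2^(n-1) * (|(k:ℝ)|^n * ‖N (k+1)‖) := by ring
        _ ≤ (n:ℝ)*2^(n-1)*(2^n*CS+CN) := by
            apply mul_le_mul_of_nonneg_left (hcomp k) (by positivity)
    calc ‖((k:ℂ) * ((Complex.I * ((k:ℂ)+1))^n - (Complex.I * (k:ℂ))^n)) • N (k+1)
          + ((Complex.I * (k:ℂ))^n • N (k+1)) * G k‖
        ≤ ‖((k:ℂ) * ((Complex.I * ((k:ℂ)+1))^n - (Complex.I * (k:ℂ))^n)) • N (k+1)‖
          + ‖((Complex.I * (k:ℂ))^n • N (k+1)) * G k‖ := norm_add_le _ _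
      _ ≤ (n:ℝ)*2^(n-1)*(2^n*CS+CN) + (2^n*CS+CN)*CG := by
          apply add_le_add hfirst
          exact (norm_mul_le _ _).trans (mul_le_mul hb (hGb k) (norm_nonneg _) (by positivity))
  · -- T difference
    intro k
    show ‖(k:ℂ) • (L (k+1) * N (k+1) - L k * N k)‖ ≤ _
    have hid : (k:ℂ) • (L (k+1) * N (k+1) - L k * N k)
        = ((k:ℂ) • (L (k+1) - L k)) * N (k+1) + L k * ((k:ℂ) • (N (k+1) - N k)) := by
      simp only [smul_sub, sub_mul, mul_sub, sma, msc]
      abel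
    rw [hid]
    calc ‖((k:ℂ) • (L (k+1) - L k)) * N (k+1) + L k * ((k:ℂ) • (N (k+1) - N k))‖
        ≤ ‖((k:ℂ) • (L (k+1) - L k)) * N (k+1)‖ + ‖L k * ((k:ℂ) • (N (k+1) - N k))‖ := norm_add_le _ _
      _ ≤ CL'*CN + CL*(CN*CG) := by
          apply add_le_add
          · exact (norm_mul_le _ _).trans (mul_le_mul (hCL' k) (hCN (k+1)) (norm_nonneg _) hCL'0)
          · exact (norm_mul_le _ _).trans (mul_le_mul (hCL k) (hNd k) (norm_nonneg _) hCL0)
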